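/- Let p be a prime, s a positive integer, q = p^s, R = Z_q[u]/(u^2), and let f ∈ R[X] be a basic irreducible polynomial. Set S = R[X]/(f). Then an element r ∈ S is a zero divisor (i.e., there exists t ∈ S with t ≠ 0 and r·t = 0) if and only if r lies in the ideal of S generated by the images of the constants p and u; in particular, the set of zero divisors of S is exactly its unique maximal ideal. -/
import Mathlib


open Polynomial

/-- The reduction map `R = Z_q[u]/(u^2) → F_p` sending `a + b·u` to `a mod p`. -/
noncomputable def dualRed (p s : ℕ) (hs : 0 < s) :
    DualNumber (ZMod (p ^ s)) →+* ZMod p :=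
  (ZMod.castHom (dvd_pow_self p hs.ne') (ZMod p)).comp
    (TrivSqZeroExt.fstHom (ZMod (p ^ s)) (ZMod (p ^ s)) (ZMod (p ^ s))).toRingHom

section Aux

variable (p s : ℕ) [hp : Fact p.Prime] (hs : 0 < s)

lemma dualRed_surjective : Function.Surjective (dualRed p s hs) := by
  intro x
  refine ⟨TrivSqZeroExt.inl ((x.val : ZMod (p ^ s))), ?_⟩
  simp [dualRed, ZMod.natCast_val, ZMod.castHom_apply, ZMod.cast_natCast (dvd_pow_self p hs.ne'),
    ZMod.natCast_val, ZMod.cast_id]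

lemma dualRed_p : dualRed p s hs (p : DualNumber (ZMod (p ^ s))) = 0 := by
  simp [dualRed, ZMod.natCast_self]

lemma dualRed_eps : dualRed p s hs DualNumber.eps = 0 := by
  simp [dualRed, DualNumber.fst_eps]

lemma pow_p_eq_zero : ((p : DualNumber (ZMod (p ^ s))))^s = 0 := by
  have h : ((p : DualNumber (ZMod (p ^ s))))^s = ((p ^ s : ℕ) : DualNumber (ZMod (p ^ s))) := by
    push_cast; ring
  rw [h, ← TrivSqZeroExt.inl_natCast, ZMod.natCast_self, TrivSqZeroExt.inl_zero]

lemma ker_dualRed (z : DualNumber (ZMod (p ^ s))) (hz : dualRed p s hs z = 0) :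
    z ∈ Ideal.span {(p : DualNumber (ZMod (p ^ s))), DualNumber.eps} := by
  obtain ⟨n, hn⟩ := ZMod.natCast_zmod_surjective (n := p ^ s) z.fst
  have hdvd : p ∣ n := by
    rw [← ZMod.natCast_eq_zero_iff]
    have : dualRed p s hs z = ZMod.castHom (dvd_pow_self p hs.ne') (ZMod p) z.fst := rfl
    rw [this, ← hn] at hz
    simpa using hz
  obtain ⟨m, rfl⟩ := hdvd
  rw [Ideal.mem_span_pair]
  refine ⟨TrivSqZeroExt.inl ((m : ZMod (p ^ s))), TrivSqZeroExt.inl z.snd, ?_⟩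
  have h1 : TrivSqZeroExt.inl (R := ZMod (p ^ s)) (M := ZMod (p ^ s)) z.snd * DualNumber.eps
      = TrivSqZeroExt.inr z.snd := by
    rw [DualNumber.eps, TrivSqZeroExt.inl_mul_inr]
    simp
  have h2 : (TrivSqZeroExt.inl ((m : ZMod (p ^ s)))) * (p : DualNumber (ZMod (p ^ s)))
      = TrivSqZeroExt.inl z.fst := by
    rw [← TrivSqZeroExt.inl_natCast (M := ZMod (p^s)) p, TrivSqZeroExt.inl_mul_inl, ← hn]
    push_cast
    ring_nf
  rw [h1, h2, TrivSqZeroExt.inl_fst_add_inr_snd_eq]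

end Aux

set_option linter.unusedSectionVars false

section Main

variable (p s : ℕ) [hp : Fact p.Prime] (hs : 0 < s)
  (f : Polynomial (DualNumber (ZMod (p ^ s))))

local notation "R'" => DualNumber (ZMod (p ^ s))

noncomputable def phi : AdjoinRoot f →+* AdjoinRoot (f.map (dualRed p s hs)) :=
  AdjoinRoot.lift ((AdjoinRoot.of (f.map (dualRed p s hs))).comp (dualRed p s hs))
    (AdjoinRoot.root (f.map (dualRed p s hs)))
    (by rw [← eval₂_map]; exact AdjoinRoot.eval₂_root _)

lemma phi_mk (g : Polynomial R') :
    phi p s hs f (AdjoinRoot.mk f g) = AdjoinRoot.mk (f.map (dualRed p s hs))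
      (g.map (dualRed p s hs)) := by
  rw [phi, AdjoinRoot.lift_mk, ← AdjoinRoot.aeval_eq, aeval_def, eval₂_map,
    AdjoinRoot.algebraMap_eq]

lemma phi_surjective : Function.Surjective (phi p s hs f) := by
  intro y
  obtain ⟨gbar, rfl⟩ := AdjoinRoot.mk_surjective y
  obtain ⟨g, rfl⟩ := Polynomial.map_surjective _ (dualRed_surjective p s hs) gbar
  exact ⟨AdjoinRoot.mk f g, phi_mk p s hs f g⟩

lemma ker_phi :
    RingHom.ker (phi p s hs f) = Ideal.span
      {AdjoinRoot.mk f (C ((p : R'))), AdjoinRoot.mk f (C (DualNumber.eps : R'))} := by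
  apply le_antisymm
  · intro r hr
    obtain ⟨g, rfl⟩ := AdjoinRoot.mk_surjective r
    rw [RingHom.mem_ker, phi_mk, AdjoinRoot.mk_eq_zero] at hr
    obtain ⟨hbar, hh⟩ := hr
    obtain ⟨h, rfl⟩ := Polynomial.map_surjective _ (dualRed_surjective p s hs) hbar
    have hmem : g - f * h ∈ Ideal.map (C : R' →+* Polynomial R')
        (Ideal.span {(p : R'), DualNumber.eps}) := by
      rw [Ideal.mem_map_C_iff]
      intro n
      apply ker_dualRed
      rw [← Polynomial.coeff_map, Polynomial.map_sub, Polynomial.map_mul, hh, sub_self,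
        Polynomial.coeff_zero]
    have hCspan : Ideal.map (C : R' →+* Polynomial R') (Ideal.span {(p : R'), DualNumber.eps})
        = Ideal.span {C ((p : R')), C (DualNumber.eps : R')} := by
      rw [Ideal.map_span, Set.image_insert_eq, Set.image_singleton]
    rw [hCspan] at hmem
    have : AdjoinRoot.mk f (g - f * h) ∈ Ideal.span
        {AdjoinRoot.mk f (C ((p : R'))), AdjoinRoot.mk f (C (DualNumber.eps : R'))} := by
      have := Ideal.mem_map_of_mem (AdjoinRoot.mk f) hmem
      rwa [Ideal.map_span, Set.image_insert_eq, Set.image_singleton] at this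
    simpa [map_sub, map_mul, AdjoinRoot.mk_self] using this
  · rw [Ideal.span_le]
    rintro x (rfl | rfl)
    · rw [SetLike.mem_coe, RingHom.mem_ker, phi_mk]
      simp [dualRed_p p s hs]
    · rw [SetLike.mem_coe, RingHom.mem_ker, phi_mk]
      simp [dualRed_eps p s hs]

lemma mem_span_nilpotent (r : AdjoinRoot f)
    (hr : r ∈ Ideal.span
      {AdjoinRoot.mk f (C ((p : R'))), AdjoinRoot.mk f (C (DualNumber.eps : R'))}) :
    IsNilpotent r := by
  have hle : Ideal.span
      {AdjoinRoot.mk f (C ((p : R'))), AdjoinRoot.mk f (C (DualNumber.eps : R'))}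
      ≤ nilradical (AdjoinRoot f) := by
    rw [Ideal.span_le]
    rintro x (rfl | rfl)
    · rw [SetLike.mem_coe, mem_nilradical]
      refine ⟨s, ?_⟩
      rw [← map_pow, ← C_pow, pow_p_eq_zero p s, map_zero, map_zero]
    · rw [SetLike.mem_coe, mem_nilradical]
      refine ⟨2, ?_⟩
      rw [← map_pow, ← C_pow, sq, DualNumber.eps_mul_eps, map_zero, map_zero]
  exact mem_nilradical.mp (hle hr)

end Main

/-- In `S = R[X]/(f)`, `f` basic irreducible, the zero divisors are exactly the
elements of the ideal generated by (the images of) `p` and `u`, which is the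
unique maximal ideal of `S`. -/
theorem zero_divisors_eq_maximal_ideal (p s : ℕ) [Fact p.Prime] (hs : 0 < s)
    (f : Polynomial (DualNumber (ZMod (p ^ s))))
    (hfm : f.Monic) (hfi : Irreducible (f.map (dualRed p s hs))) :
    (∀ r : AdjoinRoot f,
      (∃ t : AdjoinRoot f, t ≠ 0 ∧ r * t = 0) ↔
        r ∈ Ideal.span
          {AdjoinRoot.mk f (C ((p : DualNumber (ZMod (p ^ s))))),
           AdjoinRoot.mk f (C (DualNumber.eps : DualNumber (ZMod (p ^ s))))}) ∧
    ∃ hL : IsLocalRing (AdjoinRoot f),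
      @IsLocalRing.maximalIdeal (AdjoinRoot f) _ hL =
        Ideal.span
          {AdjoinRoot.mk f (C ((p : DualNumber (ZMod (p ^ s))))),
           AdjoinRoot.mk f (C (DualNumber.eps : DualNumber (ZMod (p ^ s))))} := by
  haveI : Fact (Irreducible (f.map (dualRed p s hs))) := ⟨hfi⟩
  haveI : Nontrivial (AdjoinRoot f) := (phi p s hs f).domain_nontrivial
  set m : Ideal (AdjoinRoot f) := Ideal.span
    {AdjoinRoot.mk f (C ((p : DualNumber (ZMod (p ^ s))))),
     AdjoinRoot.mk f (C (DualNumber.eps : DualNumber (ZMod (p ^ s))))} with hm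
  have hker : RingHom.ker (phi p s hs f) = m := ker_phi p s hs f
  have hnil : ∀ r ∈ m, IsNilpotent r := fun r hr => mem_span_nilpotent p s f r hr
  have hunit : ∀ r : AdjoinRoot f, r ∉ m → IsUnit r := by
    intro r hr
    have hφ : phi p s hs f r ≠ 0 := fun h0 => hr (hker ▸ RingHom.mem_ker.mpr h0)
    obtain ⟨t, ht⟩ := phi_surjective p s hs f (phi p s hs f r)⁻¹
    have h1 : phi p s hs f (1 - r * t) = 0 := by
      rw [map_sub, map_one, map_mul, ht, mul_inv_cancel₀ hφ, sub_self]
    have h2 : IsNilpotent (1 - r * t) := hnil _ (hker ▸ RingHom.mem_ker.mpr h1)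
    have h3 : IsUnit (r * t) := by simpa using h2.isUnit_one_sub
    exact isUnit_of_mul_isUnit_left h3
  have hnotunit : ∀ r ∈ m, ¬ IsUnit r := by
    intro r hr hu
    obtain ⟨n, hn⟩ := hnil r hr
    have h := hu.pow n
    rw [hn] at h
    exact one_ne_zero (isUnit_zero_iff.mp h).symm
  constructor
  · intro r
    constructor
    · rintro ⟨t, ht0, hrt⟩
      by_contra hr
      exact ht0 ((hunit r hr).mul_left_cancel (by rw [hrt, mul_zero]))
    · intro hr
      by_cases h0 : r = 0
      · exact ⟨1, one_ne_zero, by rw [h0, zero_mul]⟩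
      · obtain ⟨n, hn⟩ := hnil r hr
        have hex : ∃ k, r ^ k = 0 := ⟨n, hn⟩
        have hk := Nat.find_spec hex
        have hk1 : Nat.find hex ≠ 0 := by
          intro h; rw [h, pow_zero] at hk; exact one_ne_zero hk
        refine ⟨r ^ (Nat.find hex - 1), Nat.find_min hex (by omega), ?_⟩
        have h2 : r * r ^ (Nat.find hex - 1) = r ^ (1 + (Nat.find hex - 1)) := by
          rw [pow_add, pow_one]
        rw [h2, show 1 + (Nat.find hex - 1) = Nat.find hex by omega]
        exact hk
  · have hL : IsLocalRing (AdjoinRoot f) := by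
      apply IsLocalRing.of_nonunits_add
      intro a b ha hb
      rw [mem_nonunits_iff] at ha hb ⊢
      have ha' : a ∈ m := by by_contra h; exact ha (hunit a h)
      have hb' : b ∈ m := by by_contra h; exact hb (hunit b h)
      exact hnotunit _ (m.add_mem ha' hb')
    refine ⟨hL, ?_⟩
    ext x
    rw [IsLocalRing.mem_maximalIdeal, mem_nonunits_iff]
    constructor
    · intro hx; by_contra h; exact hx (hunit x h)
    · exact hnotunit x
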